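/- (Peano's Existence Theorem.) Let n ≥ 1, t0 ∈ ℝ, y0 ∈ ℝ^n, and suppose f is defined and continuous on some open neighborhood of (t0, y0) in ℝ × ℝ^n. Then there exists ε > 0 and a differentiable function φ : [t0−ε, t0+ε] → ℝ^n with φ(t0) = y0 and φ'(t) = f(t, φ(t)) for all t ∈ [t0−ε, t0+ε]. -/

import Mathlib

/-!
Extend `f` from a closed ball around `(t₀, y₀)` inside `U` to a bounded continuous `g` on all of
`ℝ × E` (Tietze). Tonelli's delayed equations `u t = y₀ + ∫ s in t₀..t, g (s, u (s ∓ δ))` are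
solved by finitely many Picard iterations, and their solutions are `‖g‖`-Lipschitz. By
Arzelà–Ascoli a subsequence converges uniformly as `δ → 0`, and by dominated convergence the limit
solves `y t = y₀ + ∫ s in t₀..t, g (s, y s)`. On a short enough time interval its graph stays in the
ball, where `g = f`.
-/

open Set Filter Topology MeasureTheory
open scoped NNReal BoundedContinuousFunction

noncomputable section

/-- The point `s` moved by `δ` towards `t₀`, stopping at `t₀`. -/
def delayTowards (t₀ δ s : ℝ) : ℝ := max (min (s + δ) t₀) (s - δ)

section delayTowards

variable {t₀ δ s : ℝ}

@[simp]
theorem delayTowards_zero (t₀ s : ℝ) : delayTowards t₀ 0 s = s := by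
  simp [delayTowards]

theorem continuous_delayTowards (t₀ δ : ℝ) : Continuous (delayTowards t₀ δ) := by
  unfold delayTowards; fun_prop

theorem tendsto_delayTowards_zero (t₀ s : ℝ) :
    Tendsto (fun δ => delayTowards t₀ δ s) (𝓝 0) (𝓝 s) := by
  have : Continuous fun δ => delayTowards t₀ δ s := by unfold delayTowards; fun_prop
  simpa using this.tendsto 0

theorem delayTowards_mem_uIcc (hδ : 0 ≤ δ) : delayTowards t₀ δ s ∈ uIcc t₀ s := by
  rcases le_total t₀ s with h | h
  · rw [uIcc_of_le h, delayTowards, min_eq_right (by linarith)]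
    exact ⟨le_max_left _ _, max_le h (by linarith)⟩
  · have hle : s - δ ≤ min (s + δ) t₀ := le_min (by linarith) (by linarith)
    rw [uIcc_of_ge h, delayTowards, max_eq_left hle]
    exact ⟨le_min (by linarith) h, min_le_right _ _⟩

theorem delayTowards_mem_Icc {b : ℝ} (hb : 0 ≤ b)
    (hs : s ∈ Icc (t₀ - (b + δ)) (t₀ + (b + δ))) : delayTowards t₀ δ s ∈ Icc (t₀ - b) (t₀ + b) :=
  ⟨le_max_of_le_left (le_min (by linarith [hs.1]) (by linarith)),
    max_le ((min_le_right _ _).trans (by linarith)) (by linarith [hs.2])⟩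

end delayTowards

theorem exists_subseq_tendstoUniformlyOn_Icc {β : Type*} [MetricSpace β] [ProperSpace β]
    {a b x₀ : ℝ} (hx₀ : x₀ ∈ Icc a b) {y₀ : β} {K : ℝ≥0} {u : ℕ → ℝ → β}
    (hu : ∀ k, LipschitzOnWith K (u k) (Icc a b)) (h₀ : ∀ k, u k x₀ = y₀) :
    ∃ ψ : ℕ → ℕ, StrictMono ψ ∧ ∃ v : ℝ → β, Continuous v ∧
      TendstoUniformlyOn (fun k => u (ψ k)) v atTop (Icc a b) := by
  have hab : a ≤ b := hx₀.1.trans hx₀.2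
  have : CompactSpace (Icc a b) := isCompact_iff_compactSpace.1 isCompact_Icc
  let W : ℕ → Icc a b →ᵇ β := fun k =>
    .mkOfCompact ⟨(Icc a b).domRestrict (u k), (hu k).continuousOn.domRestrict⟩
  have hW : ∀ k x, W k x ∈ Metric.closedBall y₀ (K * (b - a)) := fun k x =>
    calc dist (u k x) y₀ = dist (u k x) (u k x₀) := by rw [h₀]
      _ ≤ K * dist (x : ℝ) x₀ := (hu k).dist_le_mul _ x.2 _ hx₀
      _ ≤ K * (b - a) := by gcongr; exact Real.dist_le_of_mem_Icc x.2 hx₀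
  have hequi : Equicontinuous ((↑) : range W → Icc a b → β) :=
    (LipschitzWith.uniformEquicontinuous _ K fun ⟨_, k, hk⟩ =>
      hk ▸ (hu k).to_restrict).equicontinuous
  have hcpt := BoundedContinuousFunction.arzela_ascoli _ (isCompact_closedBall y₀ _) (range W)
    (by rintro _ x ⟨k, rfl⟩; exact hW k x) hequi
  obtain ⟨w, -, ψ, hψ, hlim⟩ :=
    hcpt.tendsto_subseq (x := W) fun k => subset_closure (mem_range_self k)
  refine ⟨ψ, hψ, w ∘ projIcc a b hab, w.continuous.comp continuous_projIcc, ?_⟩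
  rw [tendstoUniformlyOn_iff_tendstoUniformly_comp_coe]
  simp only [Function.comp_def, projIcc_val]
  exact BoundedContinuousFunction.tendsto_iff_tendstoUniformly.1 hlim

variable {E : Type*} [NormedAddCommGroup E] [NormedSpace ℝ E]

/-- For `δ = 0` this is the Picard operator of `y' = g (t, y)`, `y t₀ = y₀`. For `δ > 0` its value
at `t` only involves `u` at points `δ` closer to `t₀`, so finitely many iterations reach a fixed
point on any bounded interval: Tonelli's approximate solutions. -/
def delayedPicard (g : ℝ × E → E) (t₀ : ℝ) (y₀ : E) (δ : ℝ) (u : ℝ → E) (t : ℝ) : E :=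
  y₀ + ∫ s in t₀..t, g (s, u (delayTowards t₀ δ s))

section delayedPicard

variable {g : ℝ × E → E} {t₀ : ℝ} {y₀ : E} {δ : ℝ} {u : ℝ → E}

@[simp]
theorem delayedPicard_self : delayedPicard g t₀ y₀ δ u t₀ = y₀ := by
  simp [delayedPicard]

theorem eqOn_delayedPicard_of_eqOn {v : ℝ → E} {b : ℝ} (hb : 0 ≤ b) (hδ : 0 ≤ δ)
    (huv : EqOn u v (Icc (t₀ - b) (t₀ + b))) :
    EqOn (delayedPicard g t₀ y₀ δ u) (delayedPicard g t₀ y₀ δ v)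
      (Icc (t₀ - (b + δ)) (t₀ + (b + δ))) := by
  intro t ht
  refine congrArg (y₀ + ·) (intervalIntegral.integral_congr fun s hs => ?_)
  have hs' := (ordConnected_Icc.uIcc_subset ⟨by linarith, by linarith⟩ ht) hs
  simp only [huv (delayTowards_mem_Icc hb hs')]

theorem eqOn_delayedPicard_zero_of_tendstoUniformlyOn {M : ℝ} (hg : Continuous g)
    (hM : ∀ p, ‖g p‖ ≤ M) {I : Set ℝ} (hI : I.OrdConnected) (ht₀ : t₀ ∈ I) {δ : ℕ → ℝ}
    (hδ₀ : ∀ k, 0 ≤ δ k) (hδ : Tendsto δ atTop (𝓝 0)) {u : ℕ → ℝ → E}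
    (hu : ∀ k, Continuous (u k)) (hfix : ∀ k, EqOn (u k) (delayedPicard g t₀ y₀ (δ k) (u k)) I)
    {v : ℝ → E} (hv : Continuous v) (hlim : TendstoUniformlyOn u v atTop I) :
    EqOn v (delayedPicard g t₀ y₀ 0 v) I := by
  intro t ht
  have hsub := hI.uIcc_subset ht₀ ht
  have hint : Tendsto (fun k => ∫ s in t₀..t, g (s, u k (delayTowards t₀ (δ k) s))) atTop
      (𝓝 (∫ s in t₀..t, g (s, v s))) := by
    refine intervalIntegral.tendsto_integral_filter_of_dominated_convergence (fun _ => M)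
      (Eventually.of_forall fun k => ?_) (Eventually.of_forall fun k => ae_of_all _ fun s _ => hM _)
      intervalIntegrable_const (ae_of_all _ fun s hs => ?_)
    · have := continuous_delayTowards t₀ (δ k)
      have := hu k
      exact (by fun_prop : Continuous _).aestronglyMeasurable
    · have hsI := hsub (uIoc_subset_uIcc hs)
      have hdelay : Tendsto (fun k => delayTowards t₀ (δ k) s) atTop (𝓝[I] s) :=
        tendsto_nhdsWithin_iff.2 ⟨(tendsto_delayTowards_zero t₀ s).comp hδ,
          Eventually.of_forall fun k => hI.uIcc_subset ht₀ hsI (delayTowards_mem_uIcc (hδ₀ k))⟩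
      exact (hg.tendsto _).comp (tendsto_const_nhds.prodMk_nhds
        (hlim.tendsto_comp hv.continuousWithinAt hdelay))
  refine tendsto_nhds_unique (hlim.tendsto_at ht) ?_
  simp only [delayedPicard, delayTowards_zero]
  exact (tendsto_const_nhds.add hint).congr fun k => (hfix k ht).symm

variable [CompleteSpace E]

theorem hasDerivAt_delayedPicard (hg : Continuous g) (hu : Continuous u) (t : ℝ) :
    HasDerivAt (delayedPicard g t₀ y₀ δ u) (g (t, u (delayTowards t₀ δ t))) t := by
  have := continuous_delayTowards t₀ δ
  exact ((Continuous.integral_hasStrictDerivAt (by fun_prop) t₀ t).hasDerivAt).const_add y₀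

theorem continuous_delayedPicard (hg : Continuous g) (hu : Continuous u) :
    Continuous (delayedPicard g t₀ y₀ δ u) :=
  continuous_iff_continuousAt.2 fun t => (hasDerivAt_delayedPicard hg hu t).continuousAt

theorem lipschitzWith_delayedPicard (hg : Continuous g) (hu : Continuous u) {M : ℝ≥0}
    (hM : ∀ p, ‖g p‖₊ ≤ M) : LipschitzWith M (delayedPicard g t₀ y₀ δ u) :=
  lipschitzWith_of_nnnorm_deriv_le (fun t => (hasDerivAt_delayedPicard hg hu t).differentiableAt)
    fun t => (hasDerivAt_delayedPicard hg hu t).deriv ▸ hM _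

theorem exists_eqOn_delayedPicard (hg : Continuous g) (hδ : 0 < δ) (t₀ : ℝ) (y₀ : E) (a : ℝ) :
    ∃ u, Continuous u ∧ EqOn u (delayedPicard g t₀ y₀ δ u) (Icc (t₀ - a) (t₀ + a)) := by
  set F := delayedPicard g t₀ y₀ δ
  have hcont : ∀ m, Continuous (F^[m] fun _ => y₀) := by
    intro m
    induction m with
    | zero => exact continuous_const
    | succ m ih => rw [Function.iterate_succ_apply']; exact continuous_delayedPicard hg ih
  have hstab : ∀ m : ℕ, EqOn (F^[m] fun _ => y₀) (F^[m + 1] fun _ => y₀)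
      (Icc (t₀ - m * δ) (t₀ + m * δ)) := by
    intro m
    induction m with
    | zero =>
      intro t ht
      obtain rfl : t = t₀ := by simp only [CharP.cast_eq_zero, zero_mul, sub_zero, add_zero,
        Icc_self, mem_singleton_iff] at ht; exact ht
      simp [F]
    | succ m ih =>
      rw [show ((m + 1 : ℕ) : ℝ) * δ = m * δ + δ by push_cast; ring]
      simpa only [Function.iterate_succ_apply'] using
        eqOn_delayedPicard_of_eqOn (g := g) (y₀ := y₀) (by positivity) hδ.le ih
  obtain ⟨N, hN⟩ : ∃ N : ℕ, a ≤ N * δ := ⟨⌈a / δ⌉₊, (div_le_iff₀ hδ).1 (Nat.le_ceil _)⟩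
  refine ⟨_, hcont N, fun t ht => ?_⟩
  rw [hstab N ⟨by linarith [ht.1], by linarith [ht.2]⟩, Function.iterate_succ_apply']

end delayedPicard

theorem IsCompact.exists_boundedContinuousFunction_eqOn {X : Type*} [TopologicalSpace X]
    [NormalSpace X] [T2Space X] [FiniteDimensional ℝ E] {K : Set X} (hK : IsCompact K)
    {f : X → E} (hf : ContinuousOn f K) : ∃ g : X →ᵇ E, EqOn g f K := by
  have : CompactSpace K := isCompact_iff_compactSpace.1 hK
  obtain ⟨g, -, hg⟩ := BoundedContinuousFunction.exists_norm_eq_domRestrict_eq hK.isClosed ℝ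
    (.mkOfCompact ⟨K.domRestrict f, hf.domRestrict⟩)
  exact ⟨g, fun x hx => congr($hg ⟨x, hx⟩)⟩

theorem exists_lipschitzWith_hasDerivAt_of_nnnorm_le [FiniteDimensional ℝ E] {g : ℝ × E → E}
    (hg : Continuous g) {M : ℝ≥0} (hM : ∀ p, ‖g p‖₊ ≤ M) (t₀ : ℝ) (y₀ : E) {a : ℝ} (ha : 0 ≤ a) :
    ∃ φ : ℝ → E, φ t₀ = y₀ ∧ LipschitzWith M φ ∧
      ∀ t ∈ Icc (t₀ - a) (t₀ + a), HasDerivAt φ (g (t, φ t)) t := by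
  have ht₀ : t₀ ∈ Icc (t₀ - a) (t₀ + a) := ⟨by linarith, by linarith⟩
  choose u hu hfix using fun k : ℕ =>
    exists_eqOn_delayedPicard hg (δ := 1 / (k + 1)) Nat.one_div_pos_of_nat t₀ y₀ a
  have hlip : ∀ k, LipschitzOnWith M (u k) (Icc (t₀ - a) (t₀ + a)) := fun k x hx y hy => by
    rw [hfix k hx, hfix k hy]
    exact lipschitzWith_delayedPicard hg (hu k) hM x y
  obtain ⟨ψ, hψ, v, hv, hlim⟩ := exists_subseq_tendstoUniformlyOn_Icc ht₀ hlip
    fun k => (hfix k ht₀).trans delayedPicard_self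
  have hvfix := eqOn_delayedPicard_zero_of_tendstoUniformlyOn hg (fun p => hM p) ordConnected_Icc
    ht₀ (fun k => Nat.one_div_pos_of_nat.le)
    (tendsto_one_div_add_atTop_nhds_zero_nat.comp hψ.tendsto_atTop)
    (fun k => hu (ψ k)) (fun k => hfix (ψ k)) hv hlim
  refine ⟨delayedPicard g t₀ y₀ 0 v, delayedPicard_self,
    lipschitzWith_delayedPicard hg hv hM, fun t ht => ?_⟩
  simpa only [delayTowards_zero, ← hvfix ht] using hasDerivAt_delayedPicard (δ := 0) hg hv t

theorem exists_hasDerivWithinAt_of_continuousOn [FiniteDimensional ℝ E] {U : Set (ℝ × E)}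
    (hU : IsOpen U) {t₀ : ℝ} {y₀ : E} (hmem : (t₀, y₀) ∈ U) {f : ℝ → E → E}
    (hf : ContinuousOn (Function.uncurry f) U) :
    ∃ ε > (0 : ℝ), ∃ φ : ℝ → E, φ t₀ = y₀ ∧ ∀ t ∈ Icc (t₀ - ε) (t₀ + ε),
      (t, φ t) ∈ U ∧ HasDerivWithinAt φ (f t (φ t)) (Icc (t₀ - ε) (t₀ + ε)) t := by
  obtain ⟨ρ, hρ, hball⟩ := Metric.isOpen_iff.1 hU _ hmem
  set r := ρ / 2
  have hKU : Metric.closedBall (t₀, y₀) r ⊆ U :=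
    (Metric.closedBall_subset_ball (half_lt_self hρ)).trans hball
  obtain ⟨g, hg⟩ := (isCompact_closedBall _ r).exists_boundedContinuousFunction_eqOn (hf.mono hKU)
  set M := ‖g‖₊
  -- a solution with speed at most `M` stays in the ball of radius `r` for a time `ε`
  set ε := r / (M + 1)
  have hε : 0 < ε := by positivity
  have hεr : ε ≤ r := div_le_self (by positivity) (by simp)
  have hMε : M * ε ≤ r := calc
    M * ε ≤ (M + 1) * ε := by gcongr; simp
    _ = r := mul_div_cancel₀ _ (by positivity)
  obtain ⟨φ, hφ₀, hφM, hφ⟩ :=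
    exists_lipschitzWith_hasDerivAt_of_nnnorm_le g.continuous g.nnnorm_coe_le_nnnorm t₀ y₀ hε.le
  have hK : ∀ t ∈ Icc (t₀ - ε) (t₀ + ε), (t, φ t) ∈ Metric.closedBall (t₀, y₀) r := by
    intro t ht
    have htε : dist t t₀ ≤ ε := by rw [Real.dist_eq, abs_le]; constructor <;> linarith [ht.1, ht.2]
    refine max_le (htε.trans hεr) ?_
    calc dist (φ t) y₀ = dist (φ t) (φ t₀) := by rw [hφ₀]
      _ ≤ M * dist t t₀ := hφM.dist_le_mul t t₀
      _ ≤ r := (mul_le_mul_of_nonneg_left htε M.2).trans hMε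
  refine ⟨ε, hε, φ, hφ₀, fun t ht => ⟨hKU (hK t ht), ?_⟩⟩
  rw [← Function.uncurry_apply_pair f, ← hg (hK t ht)]
  exact (hφ t ht).hasDerivWithinAt

end

theorem peano (n : ℕ) (t0 : ℝ) (y0 : Fin n → ℝ)
    (U : Set (ℝ × (Fin n → ℝ))) (hU : IsOpen U) (hmem : (t0, y0) ∈ U)
    (f : ℝ → (Fin n → ℝ) → (Fin n → ℝ))
    (hf : ContinuousOn (fun p : ℝ × (Fin n → ℝ) => f p.1 p.2) U) :
    ∃ ε > (0:ℝ), ∃ φ : ℝ → Fin n → ℝ,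
      φ t0 = y0 ∧
      ∀ t ∈ Icc (t0 - ε) (t0 + ε),
        (t, φ t) ∈ U ∧ HasDerivWithinAt φ (f t (φ t)) (Icc (t0 - ε) (t0 + ε)) t :=
  exists_hasDerivWithinAt_of_continuousOn hU hmem hf
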